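/- Let r ≥ 2 and identify the vertices of K_{2r} with Fin (2r), placed in this circular order on a circle. The set of non-antipodal edges of K_{2r} (all edges except the r edges {i, i+r}, 0 ≤ i ≤ r−1) can be partitioned into r parts, each spanning a star forest consisting of two vertex-disjoint stars with r − 1 edges each, such that within every part no two edges cross. In particular, these r parts together contain 2r(r−1) edges and, with the antipodal matching, account for all 2r² − r edges of K_{2r}. -/

import Mathlib

/-- A simple graph is a *star forest* iff each of its connected components is a
star `K_{1,m}` (`m ≥ 0`); equivalently it is acyclic and contains no path with
three edges, which is captured by this local condition on walks of length 3. -/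
def IsStarForest {V : Type*} (G : SimpleGraph V) : Prop :=
  ∀ a b c d : V, G.Adj a b → G.Adj b c → G.Adj c d → a = c ∨ b = d

/-- With `Fin n` placed in this circular order on a circle, `x` lies strictly
inside the open circular arc from `a` to `b` (going counterclockwise). -/
def InOpenArc {n : ℕ} (a b x : Fin n) : Prop :=
  0 < (x - a).val ∧ (x - a).val < (b - a).val

/-- Two chords on the circle points `Fin n` *cross* iff they have four distinct
endpoints and exactly one endpoint of the second chord lies in the open
circular arc from one endpoint of the first chord to the other. -/
def Cross {n : ℕ} (e f : Sym2 (Fin n)) : Prop :=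
  ∃ a b c d : Fin n, e = s(a, b) ∧ f = s(c, d) ∧
    a ≠ b ∧ c ≠ d ∧ a ≠ c ∧ a ≠ d ∧ b ≠ c ∧ b ≠ d ∧
    (InOpenArc a b c ↔ ¬ InOpenArc a b d)

/-- The vertex antipodal to `i` on the circle `Fin (2r)`. -/
def antipode (r : ℕ) (i : Fin (2 * r)) : Fin (2 * r) :=
  ⟨(i.val + r) % (2 * r), Nat.mod_lt _ (Nat.lt_of_le_of_lt (Nat.zero_le _) i.isLt)⟩

/-- The `r` antipodal edges `{i, i+r}` of `K_{2r}`. -/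
def antipodalEdges (r : ℕ) : Set (Sym2 (Fin (2 * r))) :=
  {e | ∃ i : Fin (2 * r), e = s(i, antipode r i)}

/-- The star centered at `i` whose leaves are the `r - 1` vertices
`i+1, …, i+(r-1)` (indices mod `2r`). -/
def starAt (r : ℕ) (i : Fin (2 * r)) : Set (Sym2 (Fin (2 * r))) :=
  {e | ∃ j : Fin (2 * r), e = s(i, j) ∧ 1 ≤ (j - i).val ∧ (j - i).val ≤ r - 1}

/-- A set of edges is a *star* iff all its edges share a common endpoint. -/
def IsStarEdgeSet {V : Type*} (S : Set (Sym2 V)) : Prop :=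
  ∃ c : V, ∀ e ∈ S, c ∈ e

/-- Two edge sets are *vertex-disjoint* iff no vertex lies in an edge of both. -/
def VertexDisjoint {V : Type*} (A B : Set (Sym2 V)) : Prop :=
  ∀ e ∈ A, ∀ f ∈ B, ∀ v : V, v ∈ e → v ∉ f

/-!
Every non-antipodal edge `{a, b}` has exactly one endpoint `c` from which the other lies
`1, …, r - 1` steps ahead in the circular order, so it belongs to exactly one star `starAt r c`. Pairing the
star at `c` with the star at `c + r` gives the `r` parts. The two stars of a part live on the
complementary half-circles `[c, c + r)` and `[c + r, c)`, hence are vertex-disjoint and cannot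
cross each other; edges within one star share the centre, so they cannot cross either.
-/

namespace Fin

lemma val_sub_add_val_eq_or {n : ℕ} (a b : Fin n) :
    (a - b).val + b.val = a.val ∨ (a - b).val + b.val = a.val + n := by
  rcases le_or_gt b a with h | h
  · left
    rw [coe_sub_iff_le.mpr h]
    exact Nat.sub_add_cancel h
  · right
    rw [coe_sub_iff_lt.mpr h]
    have : a.val < b.val := h
    omega

lemma val_sub_self {n : ℕ} (a : Fin n) : (a - a).val = 0 := by
  rw [coe_sub_iff_le.mpr le_rfl, Nat.sub_self]

lemma val_sub_add_val_sub {n : ℕ} {a b : Fin n} (h : a ≠ b) :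
    (a - b).val + (b - a).val = n := by
  have hne : a.val ≠ b.val := fun h' => h (Fin.ext h')
  have := val_sub_add_val_eq_or a b
  have := val_sub_add_val_eq_or b a
  omega

end Fin

section Chords

variable {n : ℕ}

lemma not_cross_of_mem_of_mem {e f : Sym2 (Fin n)} {v : Fin n} (he : v ∈ e) (hf : v ∈ f) :
    ¬ Cross e f := by
  rintro ⟨a, b, c, d, rfl, rfl, -, -, hac, had, hbc, hbd, -⟩
  rcases Sym2.mem_iff.mp he with rfl | rfl <;> rcases Sym2.mem_iff.mp hf with rfl | rfl <;>
    contradiction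

/-- The arc from `a` to `b` meets the complementary arc `[o + m, o)` iff it wraps past `o`,
and then it contains all of it. -/
lemma inOpenArc_iff_of_le_val_sub {o a b x : Fin n} {m : ℕ} (ha : (a - o).val < m)
    (hb : (b - o).val < m) (hx : m ≤ (x - o).val) :
    InOpenArc a b x ↔ (b - o).val < (a - o).val := by
  have : NeZero n := ⟨o.pos.ne'⟩
  unfold InOpenArc
  rw [← sub_sub_sub_cancel_right x a o, ← sub_sub_sub_cancel_right b a o]
  have := Fin.val_sub_add_val_eq_or (x - o) (a - o)
  have := Fin.val_sub_add_val_eq_or (b - o) (a - o)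
  have := (x - o).isLt
  omega

lemma not_cross_of_separated {o : Fin n} {m : ℕ} {e f : Sym2 (Fin n)}
    (he : ∀ v ∈ e, (v - o).val < m) (hf : ∀ v ∈ f, m ≤ (v - o).val) : ¬ Cross e f := by
  rintro ⟨a, b, c, d, rfl, rfl, -, -, -, -, -, -, hcross⟩
  have ha := he a (Sym2.mem_mk_left a b)
  have hb := he b (Sym2.mem_mk_right a b)
  rw [inOpenArc_iff_of_le_val_sub ha hb (hf c (Sym2.mem_mk_left c d)),
    inOpenArc_iff_of_le_val_sub ha hb (hf d (Sym2.mem_mk_right c d))] at hcross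
  tauto

end Chords

section StarForest

variable {V : Type*} {S T : Set (Sym2 V)}

lemma VertexDisjoint.symm (h : VertexDisjoint S T) : VertexDisjoint T S :=
  fun f hf e he v hvf hve => h e he f hf v hve hvf

lemma VertexDisjoint.mem_left_of_mem_union (h : VertexDisjoint S T) {e f : Sym2 V} {v : V}
    (he : e ∈ S) (hf : f ∈ S ∪ T) (hve : v ∈ e) (hvf : v ∈ f) : f ∈ S :=
  hf.resolve_right fun hfT => h e he f hfT v hve hvf

lemma IsStarEdgeSet.eq_or_eq_of_path (hS : IsStarEdgeSet S) {a b c d : V}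
    (hab : s(a, b) ∈ S) (hbc : s(b, c) ∈ S) (hcd : s(c, d) ∈ S) (hne : b ≠ c) :
    a = c ∨ b = d := by
  obtain ⟨z, hz⟩ := hS
  rcases Sym2.mem_iff.mp (hz _ hbc) with rfl | rfl
  · rcases Sym2.mem_iff.mp (hz _ hcd) with rfl | rfl
    · exact absurd rfl hne
    · exact Or.inr rfl
  · rcases Sym2.mem_iff.mp (hz _ hab) with rfl | rfl
    · exact Or.inl rfl
    · exact absurd rfl hne

lemma isStarForest_fromEdgeSet_union (hS : IsStarEdgeSet S) (hT : IsStarEdgeSet T)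
    (hST : VertexDisjoint S T) : IsStarForest (SimpleGraph.fromEdgeSet (S ∪ T)) := by
  intro a b c d hab hbc hcd
  rw [SimpleGraph.fromEdgeSet_adj] at hab hbc hcd
  rcases hab.1 with habS | habT
  · have hbcS := hST.mem_left_of_mem_union habS hbc.1 (Sym2.mem_mk_right a b)
      (Sym2.mem_mk_left b c)
    have hcdS := hST.mem_left_of_mem_union hbcS hcd.1 (Sym2.mem_mk_right b c)
      (Sym2.mem_mk_left c d)
    exact hS.eq_or_eq_of_path habS hbcS hcdS hbc.2
  · have hbcT := hST.symm.mem_left_of_mem_union habT hbc.1.symm (Sym2.mem_mk_right a b)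
      (Sym2.mem_mk_left b c)
    have hcdT := hST.symm.mem_left_of_mem_union hbcT hcd.1.symm (Sym2.mem_mk_right b c)
      (Sym2.mem_mk_left c d)
    exact hT.eq_or_eq_of_path habT hbcT hcdT hbc.2

end StarForest

section Antipode

variable {r : ℕ}

lemma val_antipode_eq_or (i : Fin (2 * r)) :
    (antipode r i).val = i.val + r ∨ (antipode r i).val + r = i.val := by
  have hi := i.isLt
  change (i.val + r) % (2 * r) = _ ∨ (i.val + r) % (2 * r) + r = _
  rcases Nat.lt_or_ge i.val r with h | h
  · left
    exact Nat.mod_eq_of_lt (by omega)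
  · right
    rw [Nat.mod_eq_sub_mod (by omega), Nat.mod_eq_of_lt (by omega)]
    omega

lemma antipode_antipode (i : Fin (2 * r)) : antipode r (antipode r i) = i := by
  have := val_antipode_eq_or i
  have := val_antipode_eq_or (antipode r i)
  have := (antipode r i).isLt
  have := (antipode r (antipode r i)).isLt
  exact Fin.ext (by omega)

lemma val_antipode_sub_self (i : Fin (2 * r)) : (antipode r i - i).val = r := by
  have := val_antipode_eq_or i
  have := Fin.val_sub_add_val_eq_or (antipode r i) i
  have := (antipode r i - i).isLt
  have := (antipode r i).isLt
  omega

lemma val_self_sub_antipode (i : Fin (2 * r)) : (i - antipode r i).val = r := by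
  simpa only [antipode_antipode] using val_antipode_sub_self (antipode r i)

lemma eq_antipode_of_val_sub_eq {a b : Fin (2 * r)} (h : (b - a).val = r) :
    b = antipode r a := by
  have := Fin.val_sub_add_val_eq_or b a
  have := val_antipode_eq_or a
  have := b.isLt
  have := (antipode r a).isLt
  exact Fin.ext (by omega)

lemma eq_or_eq_antipode_castLE_iff {c : Fin (2 * r)} {i : Fin r} :
    c = Fin.castLE (by omega) i ∨ c = antipode r (Fin.castLE (by omega) i) ↔
      c.val % r = i.val := by
  have hant : (antipode r (Fin.castLE (by omega) i)).val = i.val + r := by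
    have := val_antipode_eq_or (Fin.castLE (by omega : r ≤ 2 * r) i)
    simp only [Fin.val_castLE] at this
    omega
  rw [Fin.ext_iff, Fin.ext_iff, hant, Fin.val_castLE]
  have := c.isLt
  have := i.isLt
  rcases Nat.lt_or_ge c.val r with h | h
  · rw [Nat.mod_eq_of_lt h]
    omega
  · rw [Nat.mod_eq_sub_mod h, Nat.mod_eq_of_lt (by omega)]
    omega

lemma antipodalEdges_subset_edgeSet_top :
    antipodalEdges r ⊆ (⊤ : SimpleGraph (Fin (2 * r))).edgeSet := by
  rintro e ⟨i, rfl⟩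
  have h := val_antipode_sub_self i
  rw [SimpleGraph.edgeSet_top, Set.mem_compl_iff, Sym2.mem_diagSet, Sym2.mk_isDiag_iff]
  rintro hi
  rw [← hi, Fin.val_sub_self] at h
  have := i.pos
  omega

lemma ncard_antipodalEdges : (antipodalEdges r).ncard = r := by
  let ι : Fin r → Fin (2 * r) := Fin.castLE (by omega)
  have hrange : antipodalEdges r = Set.range fun i => s(ι i, antipode r (ι i)) := by
    ext e
    constructor
    · rintro ⟨c, rfl⟩
      have hr : 0 < r := by have := c.pos; omega
      rcases eq_or_eq_antipode_castLE_iff (i := ⟨c.val % r, Nat.mod_lt _ hr⟩).mpr rfl with h | h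
      · exact ⟨_, by rw [h]⟩
      · exact ⟨_, by rw [h, antipode_antipode, Sym2.eq_swap]⟩
    · rintro ⟨i, rfl⟩
      exact ⟨ι i, rfl⟩
  have hinj : Function.Injective fun i => s(ι i, antipode r (ι i)) := by
    intro i j h
    have hij : ι i = ι j ∨ ι i = antipode r (ι j) := (Sym2.eq_iff.mp h).imp And.left And.left
    have := eq_or_eq_antipode_castLE_iff.mp hij
    rw [Fin.val_castLE, Nat.mod_eq_of_lt i.isLt] at this
    exact Fin.ext this
  rw [hrange, Set.ncard_range_of_injective hinj, Nat.card_eq_fintype_card, Fintype.card_fin]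

lemma ncard_edgeSet_top : (⊤ : SimpleGraph (Fin (2 * r))).edgeSet.ncard = 2 * r ^ 2 - r := by
  rw [← SimpleGraph.coe_edgeFinset, Set.ncard_coe_finset,
    SimpleGraph.card_edgeFinset_top_eq_card_choose_two, Fintype.card_fin, Nat.choose_two_right]
  rcases Nat.eq_zero_or_pos r with rfl | hr
  · rfl
  · have h : 2 * r * (2 * r - 1) = 2 * (2 * r ^ 2 - r) := by
      zify [show 1 ≤ 2 * r by omega, show r ≤ 2 * r ^ 2 by nlinarith]
      ring
    rw [h, Nat.mul_div_cancel_left _ two_pos]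

lemma ncard_edgeSet_top_diff_antipodalEdges :
    ((⊤ : SimpleGraph (Fin (2 * r))).edgeSet \ antipodalEdges r).ncard = 2 * r * (r - 1) := by
  rw [Set.ncard_sdiff antipodalEdges_subset_edgeSet_top, ncard_edgeSet_top, ncard_antipodalEdges,
    Nat.mul_sub_one, sq, ← mul_assoc]
  omega

end Antipode

section Stars

variable {r : ℕ}

lemma mem_of_mem_starAt {c : Fin (2 * r)} {e : Sym2 (Fin (2 * r))} (he : e ∈ starAt r c) :
    c ∈ e := by
  obtain ⟨j, rfl, -, -⟩ := he
  exact Sym2.mem_mk_left c j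

lemma isStarEdgeSet_starAt (c : Fin (2 * r)) : IsStarEdgeSet (starAt r c) :=
  ⟨c, fun _ => mem_of_mem_starAt⟩

lemma val_sub_le_of_mem_starAt {c v : Fin (2 * r)} {e : Sym2 (Fin (2 * r))}
    (he : e ∈ starAt r c) (hv : v ∈ e) : (v - c).val ≤ r - 1 := by
  obtain ⟨j, rfl, -, hj⟩ := he
  rcases Sym2.mem_iff.mp hv with rfl | rfl
  · rw [Fin.val_sub_self]
    exact Nat.zero_le _
  · exact hj

lemma le_val_sub_of_mem_starAt_antipode {c v : Fin (2 * r)} {e : Sym2 (Fin (2 * r))}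
    (he : e ∈ starAt r (antipode r c)) (hv : v ∈ e) : r ≤ (v - c).val := by
  have : NeZero (2 * r) := ⟨c.pos.ne'⟩
  have hle := val_sub_le_of_mem_starAt he hv
  have hc := val_antipode_sub_self c
  rw [← sub_add_sub_cancel v (antipode r c) c]
  have := Fin.val_add_eq_ite (v - antipode r c) (antipode r c - c)
  grind

lemma eq_of_mem_starAt_of_mem_starAt {c c' : Fin (2 * r)} {e : Sym2 (Fin (2 * r))}
    (h : e ∈ starAt r c) (h' : e ∈ starAt r c') : c = c' := by
  obtain ⟨j, rfl, hj₁, hj₂⟩ := h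
  obtain ⟨j', he, hj₁', hj₂'⟩ := h'
  rcases Sym2.eq_iff.mp he with ⟨rfl, rfl⟩ | ⟨rfl, rfl⟩
  · rfl
  · have : c ≠ j := by rintro rfl; rw [Fin.val_sub_self] at hj₁; omega
    have := Fin.val_sub_add_val_sub this
    omega

lemma exists_mem_starAt {e : Sym2 (Fin (2 * r))}
    (he : e ∈ (⊤ : SimpleGraph (Fin (2 * r))).edgeSet \ antipodalEdges r) :
    ∃ c, e ∈ starAt r c := by
  induction e using Sym2.ind with | _ a b => ?_
  obtain ⟨hab, hna⟩ := he
  rw [SimpleGraph.edgeSet_top, Set.mem_compl_iff, Sym2.mem_diagSet, Sym2.mk_isDiag_iff] at hab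
  have hba : (b - a).val ≠ r := fun h => hna ⟨a, by rw [← eq_antipode_of_val_sub_eq h]⟩
  have hab' : (a - b).val ≠ r := fun h =>
    hna ⟨b, by rw [← eq_antipode_of_val_sub_eq h, Sym2.eq_swap]⟩
  have hsum := Fin.val_sub_add_val_sub hab
  have := (a - b).isLt
  have := (b - a).isLt
  rcases Nat.lt_or_ge (b - a).val r with h | h
  · exact ⟨a, b, rfl, by omega, by omega⟩
  · exact ⟨b, a, Sym2.eq_swap, by omega, by omega⟩

lemma starAt_subset (c : Fin (2 * r)) :
    starAt r c ⊆ (⊤ : SimpleGraph (Fin (2 * r))).edgeSet \ antipodalEdges r := by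
  rintro e ⟨j, rfl, hj₁, hj₂⟩
  refine ⟨?_, ?_⟩
  · rw [SimpleGraph.edgeSet_top, Set.mem_compl_iff, Sym2.mem_diagSet, Sym2.mk_isDiag_iff]
    rintro rfl
    rw [Fin.val_sub_self] at hj₁
    omega
  · rintro ⟨i, hi⟩
    rcases Sym2.eq_iff.mp hi with ⟨rfl, rfl⟩ | ⟨rfl, rfl⟩
    · rw [val_antipode_sub_self] at hj₂
      omega
    · rw [val_self_sub_antipode] at hj₂
      omega

lemma ncard_starAt (c : Fin (2 * r)) : (starAt r c).ncard = r - 1 := by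
  have : NeZero (2 * r) := ⟨c.pos.ne'⟩
  have h : starAt r c = Sym2.mkEmbedding c '' ((· - c) ⁻¹' (Fin.val ⁻¹' Set.Icc 1 (r - 1))) := by
    ext e
    simp only [starAt, Set.mem_image, Set.mem_preimage, Set.mem_Icc, Sym2.mkEmbedding_apply]
    grind
  rw [h, Set.ncard_image_of_injective _ (Sym2.mkEmbedding c).injective,
    Set.ncard_preimage_of_injective_subset_range sub_left_injective
      (fun k _ => ⟨k + c, add_sub_cancel_right k c⟩),
    Set.ncard_preimage_of_injective_subset_range Fin.val_injective
      (fun k hk => ⟨⟨k, by grind⟩, rfl⟩), Set.ncard_Icc_nat]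
  omega

lemma vertexDisjoint_starAt_antipode (c : Fin (2 * r)) :
    VertexDisjoint (starAt r c) (starAt r (antipode r c)) := fun _ he _ hf v hve hvf => by
  have := val_sub_le_of_mem_starAt he hve
  have := le_val_sub_of_mem_starAt_antipode hf hvf
  omega

lemma not_cross_of_mem_starAt_of_mem_starAt_antipode {c : Fin (2 * r)}
    {e f : Sym2 (Fin (2 * r))} (he : e ∈ starAt r c) (hf : f ∈ starAt r (antipode r c)) :
    ¬ Cross e f :=
  not_cross_of_separated (o := c) (m := r)
    (fun _ hv => by have := val_sub_le_of_mem_starAt he hv; omega)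
    (fun _ hv => le_val_sub_of_mem_starAt_antipode hf hv)

end Stars

section StarPair

variable {r : ℕ}

def starPair (r : ℕ) (c : Fin (2 * r)) : Set (Sym2 (Fin (2 * r))) :=
  starAt r c ∪ starAt r (antipode r c)

lemma starPair_subset (c : Fin (2 * r)) :
    starPair r c ⊆ (⊤ : SimpleGraph (Fin (2 * r))).edgeSet \ antipodalEdges r :=
  Set.union_subset (starAt_subset c) (starAt_subset _)

lemma isStarForest_starPair (c : Fin (2 * r)) :
    IsStarForest (SimpleGraph.fromEdgeSet (starPair r c)) :=
  isStarForest_fromEdgeSet_union (isStarEdgeSet_starAt c) (isStarEdgeSet_starAt _)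
    (vertexDisjoint_starAt_antipode c)

lemma not_cross_of_mem_starPair {c : Fin (2 * r)} {e f : Sym2 (Fin (2 * r))}
    (he : e ∈ starPair r c) (hf : f ∈ starPair r c) : ¬ Cross e f := by
  rcases he with he | he <;> rcases hf with hf | hf
  · exact not_cross_of_mem_of_mem (mem_of_mem_starAt he) (mem_of_mem_starAt hf)
  · exact not_cross_of_mem_starAt_of_mem_starAt_antipode he hf
  · exact not_cross_of_mem_starAt_of_mem_starAt_antipode he (by rwa [antipode_antipode])
  · exact not_cross_of_mem_of_mem (mem_of_mem_starAt he) (mem_of_mem_starAt hf)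

lemma mem_starPair_iff {c d : Fin (2 * r)} {e : Sym2 (Fin (2 * r))} (hc : e ∈ starAt r c) :
    e ∈ starPair r d ↔ c = d ∨ c = antipode r d := by
  constructor
  · rintro (h | h)
    · exact Or.inl (eq_of_mem_starAt_of_mem_starAt hc h)
    · exact Or.inr (eq_of_mem_starAt_of_mem_starAt hc h)
  · rintro (rfl | rfl)
    · exact Or.inl hc
    · exact Or.inr hc

lemma existsUnique_mem_starPair_castLE {e : Sym2 (Fin (2 * r))}
    (he : e ∈ (⊤ : SimpleGraph (Fin (2 * r))).edgeSet \ antipodalEdges r) :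
    ∃! i : Fin r, e ∈ starPair r (Fin.castLE (by omega) i) := by
  obtain ⟨c, hc⟩ := exists_mem_starAt he
  have hr : 0 < r := by have := c.pos; omega
  simp only [mem_starPair_iff hc, eq_or_eq_antipode_castLE_iff]
  exact ⟨⟨c.val % r, Nat.mod_lt _ hr⟩, rfl, fun i hi => Fin.ext hi.symm⟩

end StarPair

theorem noncrossing_star_forest_partition_of_nonantipodal_edges_general
    (r : ℕ) :
    (∃ P : Fin r → Set (Sym2 (Fin (2 * r))),
      (∀ i, P i ⊆ (⊤ : SimpleGraph (Fin (2 * r))).edgeSet \ antipodalEdges r) ∧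
      (∀ e ∈ (⊤ : SimpleGraph (Fin (2 * r))).edgeSet \ antipodalEdges r,
        ∃! i, e ∈ P i) ∧
      (∀ i, IsStarForest (SimpleGraph.fromEdgeSet (P i))) ∧
      (∀ i, ∃ c : Fin (2 * r), P i = starAt r c ∪ starAt r (antipode r c) ∧
        VertexDisjoint (starAt r c) (starAt r (antipode r c)) ∧
        (starAt r c).ncard = r - 1 ∧ (starAt r (antipode r c)).ncard = r - 1) ∧
      (∀ i, ∀ e ∈ P i, ∀ f ∈ P i, ¬ Cross e f)) ∧
    ((⊤ : SimpleGraph (Fin (2 * r))).edgeSet \ antipodalEdges r).ncard =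
      2 * r * (r - 1) ∧
    (antipodalEdges r).ncard = r ∧
    ((⊤ : SimpleGraph (Fin (2 * r))).edgeSet).ncard = 2 * r ^ 2 - r :=
  ⟨⟨fun i => starPair r (Fin.castLE (by omega) i), fun _ => starPair_subset _,
      fun _ he => existsUnique_mem_starPair_castLE he, fun _ => isStarForest_starPair _,
      fun _ => ⟨_, rfl, vertexDisjoint_starAt_antipode _, ncard_starAt _, ncard_starAt _⟩,
      fun _ _ he _ hf => not_cross_of_mem_starPair he hf⟩,
    ncard_edgeSet_top_diff_antipodalEdges, ncard_antipodalEdges, ncard_edgeSet_top⟩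

/-- Let `r ≥ 2` and identify the vertices of `K_{2r}` with
`Fin (2r)`, placed in this circular order on a circle.  The set of
non-antipodal edges of `K_{2r}` (all edges except the `r` edges `{i, i+r}`)
can be partitioned into `r` parts, each spanning a star forest consisting of
two vertex-disjoint stars with `r − 1` edges each, such that within every part
no two edges cross.  In particular these `r` parts together contain
`2r(r−1)` edges and, with the `r` antipodal edges, account for all
`2r² − r` edges of `K_{2r}`. -/
theorem noncrossing_star_forest_partition_of_nonantipodal_edges
    (r : ℕ) (hr : 2 ≤ r) :
    (∃ P : Fin r → Set (Sym2 (Fin (2 * r))),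
      (∀ i, P i ⊆ (⊤ : SimpleGraph (Fin (2 * r))).edgeSet \ antipodalEdges r) ∧
      (∀ e ∈ (⊤ : SimpleGraph (Fin (2 * r))).edgeSet \ antipodalEdges r,
        ∃! i, e ∈ P i) ∧
      (∀ i, IsStarForest (SimpleGraph.fromEdgeSet (P i))) ∧
      (∀ i, ∃ c : Fin (2 * r), P i = starAt r c ∪ starAt r (antipode r c) ∧
        VertexDisjoint (starAt r c) (starAt r (antipode r c)) ∧
        (starAt r c).ncard = r - 1 ∧ (starAt r (antipode r c)).ncard = r - 1) ∧
      (∀ i, ∀ e ∈ P i, ∀ f ∈ P i, ¬ Cross e f)) ∧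
    ((⊤ : SimpleGraph (Fin (2 * r))).edgeSet \ antipodalEdges r).ncard =
      2 * r * (r - 1) ∧
    (antipodalEdges r).ncard = r ∧
    ((⊤ : SimpleGraph (Fin (2 * r))).edgeSet).ncard = 2 * r ^ 2 - r :=
  noncrossing_star_forest_partition_of_nonantipodal_edges_general r
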